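/- Let A be an n×m real matrix of rank k (so σ_k(A) > 0 and σ_{k+1}(A) = 0) and let Â be an n×m real matrix with ‖Â − A‖ ≤ ε ≤ σ_k(A)/2. Let U and Û be the n×k left factors of rank-k truncated SVDs of A and Â respectively. Then ‖Û Ûᵀ − U Uᵀ‖ ≤ 4ε/σ_k(A). -/

import Mathlib

open Matrix

/-- The `j`-th largest singular value (1-indexed) of a real `n × m` matrix,
defined as the square root of the `j`-th largest eigenvalue of `Aᵀ * A`;
it is `0` when `j = 0` or `j > m`. -/
noncomputable def sval {n m : ℕ} (A : Matrix (Fin n) (Fin m) ℝ) (j : ℕ) : ℝ :=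
  if 1 ≤ j ∧ j ≤ m then
    (((Finset.univ.val.map fun i =>
        Real.sqrt ((by simpa using Matrix.isHermitian_conjTranspose_mul_self A : (Aᵀ * A).IsHermitian).eigenvalues i)).sort (· ≤ ·)).getD
      (m - j) 0)
  else 0

/-- The spectral norm (ℓ₂ operator norm) of a real matrix, i.e. its largest singular value. -/
noncomputable def matSpectralNorm {n m : ℕ} (A : Matrix (Fin n) (Fin m) ℝ) : ℝ := sval A 1

/-- Euclidean norm of a vector. -/
noncomputable def evnorm {n : ℕ} (x : Fin n → ℝ) : ℝ := Real.sqrt (∑ i, (x i) ^ 2)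

/-- `M^{1/2}`: the unique positive semidefinite square root of a positive semidefinite
real matrix (junk value `0` if `M` is not positive semidefinite). -/
noncomputable def msqrt {k : ℕ} (M : Matrix (Fin k) (Fin k) ℝ) : Matrix (Fin k) (Fin k) ℝ :=
  by classical exact if h : M.PosSemidef then ((h.1.eigenvectorUnitary : Matrix (Fin k) (Fin k) ℝ) * diagonal (fun i => Real.sqrt (h.1.eigenvalues i)) * (star h.1.eigenvectorUnitary : Matrix (Fin k) (Fin k) ℝ)) else 0

/-!
Weyl's inequality `σⱼ(Â) ≤ σⱼ(A) + ‖Â - A‖`, a consequence of the Courant–Fischer principle, gives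
`σₖ(Â) ≥ σₖ(A) / 2` and `σₖ₊₁(Â) ≤ ε`. The columns of `V̂` are eigenvectors of `ÂᵀÂ` for its top `k`
eigenvalues counted with multiplicity, so `Â` is bounded by `σₖ₊₁(Â)` on their orthogonal
complement; hence `‖(1 - ÛÛᵀ)Â‖ ≤ ε`, and in the same way `(1 - UUᵀ)A = 0`.
With `P = UUᵀ` and `P̂ = ÛÛᵀ` we have `P̂ - P = (1 - P)P̂ - ((1 - P̂)P)ᵀ`. As `Û = ÂV̂D̂⁻¹` and
`U = AVD⁻¹`, the first term is at most `‖(1 - P)(Â - A)‖ / (σₖ(A) / 2)` and the second at most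
`(‖(1 - P̂)Â‖ + ‖Â - A‖) / σₖ(A)`, each bounded by `2ε / σₖ(A)`.
-/

open Module Submodule
open scoped RealInnerProductSpace Matrix.Norms.L2Operator

section InnerProductSpace

variable {E F : Type*} [NormedAddCommGroup E] [InnerProductSpace ℝ E] [FiniteDimensional ℝ E]
  [NormedAddCommGroup F] [InnerProductSpace ℝ F] [FiniteDimensional ℝ F]

theorem Submodule.exists_ne_zero_mem_orthogonal_of_finrank_lt (K G : Submodule ℝ E)
    (h : finrank ℝ G < finrank ℝ K) : ∃ x ∈ K, x ≠ 0 ∧ x ∈ Gᗮ := by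
  have hdim := finrank_sup_add_finrank_inf_eq K Gᗮ
  have hG := G.finrank_add_finrank_orthogonal
  have hsup := (K ⊔ Gᗮ).finrank_le
  obtain ⟨x, hx, hx0⟩ := (K ⊓ Gᗮ).ne_bot_iff.1 fun hbot => by
    rw [hbot, finrank_bot] at hdim
    omega
  exact ⟨x, hx.1, hx0, hx.2⟩

namespace LinearMap

variable (T : E →ₗ[ℝ] F)

noncomputable def rightSingularBasis : OrthonormalBasis (Fin (finrank ℝ E)) ℝ E :=
  T.isSymmetric_adjoint_comp_self.eigenvectorBasis rfl

theorem adjoint_comp_self_rightSingularBasis (i : Fin (finrank ℝ E)) :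
    (adjoint T ∘ₗ T) (T.rightSingularBasis i) =
      T.singularValues i ^ 2 • T.rightSingularBasis i := by
  rw [rightSingularBasis, T.isSymmetric_adjoint_comp_self.apply_eigenvectorBasis,
    T.sq_singularValues_fin rfl]
  rfl

theorem norm_apply_sq_eq_sum (x : E) :
    ‖T x‖ ^ 2 =
      ∑ i : Fin (finrank ℝ E), T.singularValues i ^ 2 * ⟪T.rightSingularBasis i, x⟫ ^ 2 := by
  rw [← real_inner_self_eq_norm_sq, ← adjoint_inner_left, ← comp_apply,
    ← T.rightSingularBasis.sum_inner_mul_inner]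
  refine Finset.sum_congr rfl fun i _ => ?_
  rw [T.isSymmetric_adjoint_comp_self, adjoint_comp_self_rightSingularBasis,
    real_inner_smul_right, real_inner_comm]
  ring

theorem norm_apply_le_of_inner_rightSingularBasis_eq_zero {j : ℕ} {x : E}
    (hx : ∀ i : Fin (finrank ℝ E), T.singularValues j < T.singularValues i →
      ⟪T.rightSingularBasis i, x⟫ = 0) :
    ‖T x‖ ≤ T.singularValues j * ‖x‖ := by
  refine (sq_le_sq₀ (norm_nonneg _) (mul_nonneg (T.singularValues_nonneg j) (norm_nonneg _))).1 ?_
  rw [norm_apply_sq_eq_sum, mul_pow, ← T.rightSingularBasis.sum_sq_inner_right x, Finset.mul_sum]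
  refine Finset.sum_le_sum fun i _ => ?_
  rcases lt_or_ge (T.singularValues j) (T.singularValues i) with hi | hi
  · simp [hx i hi]
  · gcongr
    exact T.singularValues_nonneg i

theorem le_norm_apply_of_inner_rightSingularBasis_eq_zero {j : ℕ} {x : E}
    (hx : ∀ i : Fin (finrank ℝ E), T.singularValues i < T.singularValues j →
      ⟪T.rightSingularBasis i, x⟫ = 0) :
    T.singularValues j * ‖x‖ ≤ ‖T x‖ := by
  refine (sq_le_sq₀ (mul_nonneg (T.singularValues_nonneg j) (norm_nonneg _)) (norm_nonneg _)).1 ?_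
  rw [norm_apply_sq_eq_sum, mul_pow, ← T.rightSingularBasis.sum_sq_inner_right x, Finset.mul_sum]
  refine Finset.sum_le_sum fun i _ => ?_
  rcases lt_or_ge (T.singularValues i) (T.singularValues j) with hi | hi
  · simp [hx i hi]
  · gcongr
    exact T.singularValues_nonneg j

theorem norm_apply_le_singularValues_zero_mul (x : E) : ‖T x‖ ≤ T.singularValues 0 * ‖x‖ :=
  T.norm_apply_le_of_inner_rightSingularBasis_eq_zero fun i hi =>
    absurd (T.singularValues_antitone (Nat.zero_le i)) hi.not_ge

theorem singularValues_zero_eq_opNorm : T.singularValues 0 = ‖T.toContinuousLinearMap‖ := by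
  refine le_antisymm ?_ (ContinuousLinearMap.opNorm_le_bound _ (T.singularValues_nonneg 0)
    T.norm_apply_le_singularValues_zero_mul)
  rcases Nat.eq_zero_or_pos (finrank ℝ E) with hE | hE
  · rw [T.singularValues_of_finrank_le hE.le]
    exact norm_nonneg _
  · set b := T.rightSingularBasis
    have h := T.le_norm_apply_of_inner_rightSingularBasis_eq_zero (j := 0) (x := b ⟨0, hE⟩)
      fun i hi => by
        rw [b.inner_eq_zero]
        rintro rfl
        exact hi.false
    rw [b.orthonormal.1, mul_one] at h
    simpa [b.orthonormal.1] using h.trans (T.toContinuousLinearMap.le_opNorm (b ⟨0, hE⟩))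

theorem exists_ne_zero_mem_norm_apply_le (K : Submodule ℝ E) {j : ℕ} (hj : j < finrank ℝ K) :
    ∃ x ∈ K, x ≠ 0 ∧ ‖T x‖ ≤ T.singularValues j * ‖x‖ := by
  have hjE : j < finrank ℝ E := hj.trans_le K.finrank_le
  set b := T.rightSingularBasis
  set s := Finset.Iio (⟨j, hjE⟩ : Fin (finrank ℝ E))
  have hG : finrank ℝ (span ℝ (Set.range fun i : s => b i)) < finrank ℝ K :=
    calc _ ≤ s.card := (finrank_range_le_card _).trans (Fintype.card_coe s).le
      _ < _ := by rwa [Fin.card_Iio]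
  obtain ⟨x, hxK, hx0, hxG⟩ := exists_ne_zero_mem_orthogonal_of_finrank_lt K _ hG
  refine ⟨x, hxK, hx0, T.norm_apply_le_of_inner_rightSingularBasis_eq_zero fun i hi => ?_⟩
  have hij : i ∈ s := by
    by_contra h
    simp only [s, Finset.mem_Iio, not_lt] at h
    exact hi.not_ge (T.singularValues_antitone h)
  exact (mem_orthogonal _ x).1 hxG _ (subset_span ⟨⟨i, hij⟩, rfl⟩)

/-- Weyl's inequality. -/
theorem singularValues_le_add_singularValues_sub (T₁ T₂ : E →ₗ[ℝ] F) (j : ℕ) :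
    T₁.singularValues j ≤ T₂.singularValues j + (T₁ - T₂).singularValues 0 := by
  rcases lt_or_ge j (finrank ℝ E) with hjE | hjE
  · set b := T₁.rightSingularBasis
    set s := Finset.Ioi (⟨j, hjE⟩ : Fin (finrank ℝ E))
    have hK : j < finrank ℝ (span ℝ (Set.range fun i : s => b i))ᗮ := by
      have h₁ := (span ℝ (Set.range fun i : s => b i)).finrank_add_finrank_orthogonal
      have h₂ : finrank ℝ (span ℝ (Set.range fun i : s => b i)) ≤ s.card :=
        (finrank_range_le_card _).trans (Fintype.card_coe s).le
      rw [Fin.card_Ioi] at h₂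
      simp only at h₂
      omega
    obtain ⟨x, hxK, hx0, hx⟩ := T₂.exists_ne_zero_mem_norm_apply_le _ hK
    have h₁ : T₁.singularValues j * ‖x‖ ≤ ‖T₁ x‖ :=
      T₁.le_norm_apply_of_inner_rightSingularBasis_eq_zero fun i hi => by
        have hij : i ∈ s := by
          by_contra h
          simp only [s, Finset.mem_Ioi, not_lt] at h
          exact hi.not_ge (T₁.singularValues_antitone h)
        exact (mem_orthogonal _ x).1 hxK _ (subset_span ⟨⟨i, hij⟩, rfl⟩)
    have h₂ := (T₁ - T₂).norm_apply_le_singularValues_zero_mul x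
    refine le_of_mul_le_mul_right ?_ (norm_pos_iff.2 hx0)
    calc T₁.singularValues j * ‖x‖ ≤ ‖T₁ x‖ := h₁
      _ ≤ ‖T₂ x‖ + ‖(T₁ - T₂) x‖ := by rw [sub_apply]; exact norm_le_insert' _ _
      _ ≤ _ := by rw [add_mul]; exact add_le_add hx h₂
  · rw [T₁.singularValues_of_finrank_le hjE]
    exact add_nonneg (T₂.singularValues_nonneg j) ((T₁ - T₂).singularValues_nonneg 0)

/-- For `σₖ < σᵢ`, the `σᵢ²`-eigenspace of `T†T` has dimension at most the number of `v j` it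
contains, so these span it and `x` is orthogonal to `T.rightSingularBasis i`. -/
theorem norm_apply_le_of_orthonormal_eigenvectors {k : ℕ} {v : Fin k → E}
    (hv : Orthonormal ℝ v) (hTv : ∀ j, (adjoint T ∘ₗ T) (v j) = T.singularValues j ^ 2 • v j)
    {x : E} (hx : ∀ j, ⟪v j, x⟫ = 0) : ‖T x‖ ≤ T.singularValues k * ‖x‖ := by
  refine T.norm_apply_le_of_inner_rightSingularBasis_eq_zero fun i hi => ?_
  set μ := T.singularValues i ^ 2
  have hlt : ∀ i' : Fin (finrank ℝ E), T.singularValues i' ^ 2 = μ → (i' : ℕ) < k := by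
    intro i' hi'
    by_contra h
    rw [sq_eq_sq₀ (T.singularValues_nonneg _) (T.singularValues_nonneg _)] at hi'
    exact hi.not_ge (hi' ▸ T.singularValues_antitone (not_lt.1 h))
  let J := {j : Fin k // T.singularValues j ^ 2 = μ}
  set W := span ℝ (Set.range fun j : J => v j)
  have hW : W = Module.End.eigenspace (adjoint T ∘ₗ T) μ := by
    refine eq_of_le_of_finrank_le (span_le.2 ?_) ?_
    · rintro _ ⟨j, rfl⟩
      exact Module.End.mem_eigenspace_iff.2 ((hTv j).trans (by rw [j.2]))
    · rw [← T.isSymmetric_adjoint_comp_self.card_filter_eigenvalues_eq rfl,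
        finrank_span_eq_card (b := fun j : J => v j)
          (hv.linearIndependent.comp _ Subtype.val_injective),
        ← Fintype.card_subtype]
      simp only [← T.sq_singularValues_fin rfl]
      exact Fintype.card_le_of_injective (fun i' => ⟨⟨i'.1, hlt _ i'.2⟩, i'.2⟩)
        fun a b hab => Subtype.ext (Fin.ext (congrArg (fun j : J => (j.1 : ℕ)) hab))
  have hb : T.rightSingularBasis i ∈ W :=
    hW ▸ Module.End.mem_eigenspace_iff.2 (T.adjoint_comp_self_rightSingularBasis i)
  have hxW : W ≤ (ℝ ∙ x)ᗮ := span_le.2 <| by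
    rintro _ ⟨j, rfl⟩
    exact mem_orthogonal_singleton_iff_inner_left.2 (hx j)
  exact mem_orthogonal_singleton_iff_inner_left.1 (hxW hb)

end LinearMap

end InnerProductSpace

theorem Multiset.sort_map_univ_of_antitone {m : ℕ} {f : Fin m → ℝ} (hf : Antitone f) :
    (Finset.univ.val.map f).sort (· ≤ ·) = List.ofFn (f ∘ Fin.rev) := by
  have hperm : Finset.univ.val.map f = ↑(List.ofFn (f ∘ Fin.rev)) := by
    rw [← Fin.univ_val_map, show f ∘ Fin.rev = f ∘ Fin.revPerm from rfl, ← Multiset.map_map,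
      show Multiset.map Fin.revPerm Finset.univ.val =
        (Finset.univ.map Fin.revPerm.toEmbedding).val from rfl, Finset.map_univ_equiv]
  rw [hperm, Multiset.coe_sort]
  apply List.mergeSort_of_pairwise
  simpa [List.sortedLE_iff_pairwise] using (Antitone.comp hf Fin.rev_anti).sortedLE_ofFn

namespace Matrix

variable {n m : ℕ}

theorem adjoint_toEuclideanLin_comp_self (B : Matrix (Fin n) (Fin m) ℝ) :
    LinearMap.adjoint (toEuclideanLin B) ∘ₗ toEuclideanLin B = toEuclideanLin (Bᵀ * B) := by
  rw [← toEuclideanLin_conjTranspose_eq_adjoint, conjTranspose_eq_transpose_of_trivial]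
  exact (toLpLin_mul 2 2 2 _ _).symm

theorem toEuclideanLin_mul_apply {l : ℕ} (M : Matrix (Fin n) (Fin m) ℝ)
    (N : Matrix (Fin m) (Fin l) ℝ) (x : EuclideanSpace ℝ (Fin l)) :
    toEuclideanLin (M * N) x = toEuclideanLin M (toEuclideanLin N x) := by
  rw [toEuclideanLin, toLpLin_mul 2 2 2]
  rfl

theorem inner_toEuclideanLin_left (M : Matrix (Fin n) (Fin m) ℝ) (x : EuclideanSpace ℝ (Fin m))
    (y : EuclideanSpace ℝ (Fin n)) : ⟪toEuclideanLin M x, y⟫ = ⟪x, toEuclideanLin Mᵀ y⟫ := by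
  rw [← conjTranspose_eq_transpose_of_trivial, toEuclideanLin_conjTranspose_eq_adjoint,
    LinearMap.adjoint_inner_right]

theorem IsHermitian.map_eigenvalues_transpose_mul_self (B : Matrix (Fin n) (Fin m) ℝ)
    (h : (Bᵀ * B).IsHermitian) :
    Finset.univ.val.map h.eigenvalues = Finset.univ.val.map
      ((toEuclideanLin B).isSymmetric_adjoint_comp_self.eigenvalues finrank_euclideanSpace_fin) := by
  have h₁ := h.roots_charpoly_eq_eigenvalues
  have h₂ := (toEuclideanLin B).isSymmetric_adjoint_comp_self.roots_charpoly_eq_eigenvalues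
    finrank_euclideanSpace_fin
  have h₃ : (LinearMap.adjoint (toEuclideanLin B) ∘ₗ toEuclideanLin B).charpoly =
      (Bᵀ * B).charpoly := by
    rw [adjoint_toEuclideanLin_comp_self, toEuclideanLin, toLpLin_eq_toLin]
    exact charpoly_toLin _ _
  rw [h₃, h₁] at h₂
  simpa using h₂

end Matrix

section sval

variable {n m : ℕ}

theorem sval_succ (B : Matrix (Fin n) (Fin m) ℝ) (j : ℕ) :
    sval B (j + 1) = (toEuclideanLin B).singularValues j := by
  by_cases hj : j < m
  · rw [sval, if_pos ⟨by omega, by omega⟩]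
    generalize_proofs h
    have hmap : Finset.univ.val.map (fun i => √(h.eigenvalues i))
        = Finset.univ.val.map (fun i : Fin m => (toEuclideanLin B).singularValues i) := by
      rw [show (fun i => √(h.eigenvalues i)) = Real.sqrt ∘ h.eigenvalues from rfl,
        ← Multiset.map_map, IsHermitian.map_eigenvalues_transpose_mul_self B h, Multiset.map_map]
      congr 1
      funext i
      exact ((toEuclideanLin B).singularValues_fin finrank_euclideanSpace_fin i).symm
    rw [hmap, Multiset.sort_map_univ_of_antitone fun a b hab =>
        (toEuclideanLin B).singularValues_antitone hab,
      List.getD_eq_getElem _ _ (by rw [List.length_ofFn]; omega), List.getElem_ofFn,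
      Function.comp_apply, Fin.val_rev, Fin.val_mk]
    congr 1
    omega
  · rw [sval, if_neg (by omega),
      LinearMap.singularValues_of_finrank_le _ (by rw [finrank_euclideanSpace_fin]; omega)]

theorem sval_zero (B : Matrix (Fin n) (Fin m) ℝ) : sval B 0 = 0 := by
  simp [sval]

theorem sval_nonneg (B : Matrix (Fin n) (Fin m) ℝ) (j : ℕ) : 0 ≤ sval B j := by
  cases j with
  | zero => rw [sval_zero]
  | succ j => rw [sval_succ]; exact (toEuclideanLin B).singularValues_nonneg j

theorem sval_le_of_lt (B : Matrix (Fin n) (Fin m) ℝ) {i j : ℕ} (hij : i < j) :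
    sval B j ≤ sval B (i + 1) := by
  obtain ⟨j, rfl⟩ := Nat.exists_eq_add_of_lt hij
  rw [sval_succ, sval_succ]
  exact (toEuclideanLin B).singularValues_antitone (by omega)

theorem matSpectralNorm_eq_l2_opNorm (B : Matrix (Fin n) (Fin m) ℝ) :
    matSpectralNorm B = ‖B‖ := by
  rw [matSpectralNorm, sval_succ, LinearMap.singularValues_zero_eq_opNorm, l2_opNorm_def]
  rfl

theorem sval_le_sval_add (B C : Matrix (Fin n) (Fin m) ℝ) (j : ℕ) :
    sval B j ≤ sval C j + ‖B - C‖ := by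
  cases j with
  | zero => simp [sval_zero]
  | succ j =>
    rw [sval_succ, sval_succ, ← matSpectralNorm_eq_l2_opNorm, matSpectralNorm, sval_succ, map_sub]
    exact LinearMap.singularValues_le_add_singularValues_sub _ _ j

end sval

namespace Matrix

variable {n m k : ℕ}

theorem l2_opNorm_transpose (M : Matrix (Fin n) (Fin m) ℝ) : ‖Mᵀ‖ = ‖M‖ := by
  rw [← conjTranspose_eq_transpose_of_trivial, l2_opNorm_conjTranspose]

theorem l2_opNorm_le_one_of_transpose_mul_self {U : Matrix (Fin n) (Fin k) ℝ}
    (hU : Uᵀ * U = 1) : ‖U‖ ≤ 1 := by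
  have h := l2_opNorm_conjTranspose_mul_self U
  rw [conjTranspose_eq_transpose_of_trivial, hU, ← diagonal_one, l2_opNorm_diagonal] at h
  have h₁ : ‖fun _ : Fin k => (1 : ℝ)‖ ≤ 1 :=
    (pi_norm_le_iff_of_nonneg zero_le_one).2 fun _ => by simp
  nlinarith [norm_nonneg U]

theorem l2_opNorm_one_sub_mul_transpose_le {U : Matrix (Fin n) (Fin k) ℝ} (hU : Uᵀ * U = 1) :
    ‖1 - U * Uᵀ‖ ≤ 1 := by
  have hQ : (1 - U * Uᵀ)ᴴ * (1 - U * Uᵀ) = 1 - U * Uᵀ := by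
    rw [conjTranspose_eq_transpose_of_trivial]
    simp only [transpose_sub, transpose_one, transpose_mul, transpose_transpose, sub_mul, mul_sub,
      one_mul, mul_one, Matrix.mul_assoc]
    rw [← Matrix.mul_assoc Uᵀ, hU, Matrix.one_mul]
    abel
  have h := l2_opNorm_conjTranspose_mul_self (1 - U * Uᵀ)
  rw [hQ] at h
  nlinarith [norm_nonneg (1 - U * Uᵀ)]

theorem l2_opNorm_one_sub_mul_transpose_mul_le {U : Matrix (Fin n) (Fin k) ℝ} (hU : Uᵀ * U = 1)
    (M : Matrix (Fin n) (Fin m) ℝ) : ‖(1 - U * Uᵀ) * M‖ ≤ ‖M‖ :=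
  (l2_opNorm_mul _ _).trans (mul_le_of_le_one_left (norm_nonneg M)
    (l2_opNorm_one_sub_mul_transpose_le hU))

theorem l2_opNorm_diagonal_inv_le {d : Fin k → ℝ} {s : ℝ} (hs : 0 < s) (hd : ∀ i, s ≤ d i) :
    ‖diagonal fun i => (d i)⁻¹‖ ≤ s⁻¹ := by
  rw [l2_opNorm_diagonal]
  refine (pi_norm_le_iff_of_nonneg (inv_nonneg.2 hs.le)).2 fun i => ?_
  rw [Real.norm_eq_abs, abs_of_pos (inv_pos.2 (hs.trans_le (hd i)))]
  exact inv_anti₀ hs (hd i)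

theorem l2_opNorm_mul_transpose_sub_mul_transpose_le (U W : Matrix (Fin n) (Fin k) ℝ) :
    ‖W * Wᵀ - U * Uᵀ‖ ≤ ‖(1 - U * Uᵀ) * (W * Wᵀ)‖ + ‖(1 - W * Wᵀ) * (U * Uᵀ)‖ := by
  rw [← l2_opNorm_transpose ((1 - W * Wᵀ) * (U * Uᵀ))]
  refine le_of_eq_of_le ?_ (norm_sub_le _ _)
  simp only [transpose_mul, transpose_sub, transpose_transpose, Matrix.sub_mul, Matrix.one_mul]
  abel_nf

/-- The bound comes from writing `U = B V D⁻¹`. -/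
theorem l2_opNorm_mul_mul_transpose_le (Q : Matrix (Fin n) (Fin n) ℝ)
    {B : Matrix (Fin n) (Fin m) ℝ} {U : Matrix (Fin n) (Fin k) ℝ} {V : Matrix (Fin m) (Fin k) ℝ}
    {d : Fin k → ℝ} {s : ℝ} (hs : 0 < s) (hd : ∀ i, s ≤ d i)
    (hU : Uᵀ * U = 1) (hV : Vᵀ * V = 1) (hBV : B * V = U * diagonal d) :
    ‖Q * (U * Uᵀ)‖ ≤ ‖Q * B‖ / s := by
  have hU' : U = B * V * diagonal fun i => (d i)⁻¹ := by
    rw [hBV, Matrix.mul_assoc, diagonal_mul_diagonal]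
    simp [mul_inv_cancel₀ (hs.trans_le (hd _)).ne']
  calc ‖Q * (U * Uᵀ)‖ = ‖Q * B * V * (diagonal fun i => (d i)⁻¹) * Uᵀ‖ := by
        nth_rw 1 [hU']
        simp only [Matrix.mul_assoc]
    _ ≤ ‖Q * B‖ * 1 * s⁻¹ * 1 := by
        refine (l2_opNorm_mul _ _).trans (mul_le_mul ?_ ?_ (norm_nonneg _) (by positivity))
        · refine (l2_opNorm_mul _ _).trans (mul_le_mul ?_ (l2_opNorm_diagonal_inv_le hs hd)
            (norm_nonneg _) (by positivity))
          exact (l2_opNorm_mul _ _).trans (mul_le_mul_of_nonneg_left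
            (l2_opNorm_le_one_of_transpose_mul_self hV) (norm_nonneg _))
        · rw [l2_opNorm_transpose]
          exact l2_opNorm_le_one_of_transpose_mul_self hU
    _ = ‖Q * B‖ / s := by ring

theorem l2_opNorm_mul_one_sub_mul_transpose_le_sval {B : Matrix (Fin n) (Fin m) ℝ}
    {V : Matrix (Fin m) (Fin k) ℝ} (hV : Vᵀ * V = 1)
    (hBV : Bᵀ * B * V = V * diagonal fun j : Fin k => sval B (j.val + 1) ^ 2) :
    ‖B * (1 - V * Vᵀ)‖ ≤ sval B (k + 1) := by
  set T := toEuclideanLin B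
  let Vᵢ := (toEuclideanLin V).isometryOfInner fun x y => by
    rw [inner_toEuclideanLin_left, ← toEuclideanLin_mul_apply, hV, toEuclideanLin, toLpLin_one,
      LinearMap.id_apply]
  let v := fun j => Vᵢ (EuclideanSpace.basisFun (Fin k) ℝ j)
  have hv : Orthonormal ℝ v := (EuclideanSpace.basisFun _ ℝ).orthonormal.comp_linearIsometry Vᵢ
  have hTv : ∀ j, (LinearMap.adjoint T ∘ₗ T) (v j) = T.singularValues j ^ 2 • v j := by
    intro j
    simp only [v, Vᵢ, LinearMap.coe_isometryOfInner]
    rw [adjoint_toEuclideanLin_comp_self, ← toEuclideanLin_mul_apply, hBV,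
      toEuclideanLin_mul_apply]
    simp only [← map_smul, sval_succ]
    congr 1
    ext i
    simp [toLpLin_apply, T]
  rw [l2_opNorm_def]
  refine ContinuousLinearMap.opNorm_le_bound _ (sval_nonneg _ _) fun x => ?_
  set y := toEuclideanLin (1 - V * Vᵀ) x
  have hy : ∀ j, ⟪v j, y⟫ = 0 := by
    intro j
    simp only [v, Vᵢ, LinearMap.coe_isometryOfInner]
    rw [inner_toEuclideanLin_left, ← toEuclideanLin_mul_apply, Matrix.mul_sub, ← Matrix.mul_assoc,
      hV, Matrix.mul_one, Matrix.one_mul, sub_self, map_zero, LinearMap.zero_apply, inner_zero_right]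
  have hyx : ‖y‖ ≤ ‖x‖ := by
    have h := ((toEuclideanLin.trans LinearMap.toContinuousLinearMap) (1 - V * Vᵀ)).le_opNorm x
    rw [← l2_opNorm_def] at h
    exact h.trans (mul_le_of_le_one_left (norm_nonneg x) (l2_opNorm_one_sub_mul_transpose_le hV))
  calc _ = ‖T y‖ := congrArg norm (toEuclideanLin_mul_apply _ _ x)
    _ ≤ T.singularValues k * ‖y‖ := T.norm_apply_le_of_orthonormal_eigenvectors hv hTv hy
    _ ≤ sval B (k + 1) * ‖x‖ := by
        rw [sval_succ]
        exact mul_le_mul_of_nonneg_left hyx (T.singularValues_nonneg k)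

theorem l2_opNorm_one_sub_mul_transpose_mul_le_sval {B : Matrix (Fin n) (Fin m) ℝ}
    {U : Matrix (Fin n) (Fin k) ℝ} {V : Matrix (Fin m) (Fin k) ℝ} (hU : Uᵀ * U = 1)
    (hV : Vᵀ * V = 1) (hBV : B * V = U * diagonal fun j : Fin k => sval B (j.val + 1))
    (hBU : Bᵀ * U = V * diagonal fun j : Fin k => sval B (j.val + 1)) :
    ‖(1 - U * Uᵀ) * B‖ ≤ sval B (k + 1) := by
  have hBBV : Bᵀ * B * V = V * diagonal fun j : Fin k => sval B (j.val + 1) ^ 2 := by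
    rw [Matrix.mul_assoc, hBV, ← Matrix.mul_assoc, hBU, Matrix.mul_assoc, diagonal_mul_diagonal]
    simp only [sq]
  have hPU : (1 - U * Uᵀ) * U = 0 := by
    rw [Matrix.sub_mul, Matrix.one_mul, Matrix.mul_assoc, hU, Matrix.mul_one, sub_self]
  have hres : (1 - U * Uᵀ) * B = (1 - U * Uᵀ) * (B * (1 - V * Vᵀ)) := by
    rw [Matrix.mul_sub B, Matrix.mul_one, ← Matrix.mul_assoc B, hBV, Matrix.mul_sub (1 - U * Uᵀ)]
    simp only [← Matrix.mul_assoc, hPU, Matrix.zero_mul, sub_zero]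
  rw [hres]
  exact (l2_opNorm_one_sub_mul_transpose_mul_le hU _).trans
    (l2_opNorm_mul_one_sub_mul_transpose_le_sval hV hBBV)

end Matrix

theorem projection_perturbation_general
    {n m k : ℕ}
    (A Ahat : Matrix (Fin n) (Fin m) ℝ) (ε : ℝ)
    (hrank : 0 < sval A k) (hrank' : sval A (k + 1) = 0)
    (hpert : matSpectralNorm (Ahat - A) ≤ ε) (hε : ε ≤ sval A k / 2)
    (U : Matrix (Fin n) (Fin k) ℝ) (V : Matrix (Fin m) (Fin k) ℝ)
    (D : Matrix (Fin k) (Fin k) ℝ)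
    (hU : Uᵀ * U = 1) (hV : Vᵀ * V = 1)
    (hD : D = Matrix.diagonal fun i : Fin k => sval A (i.val + 1))
    (hAV : A * V = U * D) (hAU : Aᵀ * U = V * D)
    (Uhat : Matrix (Fin n) (Fin k) ℝ) (Vhat : Matrix (Fin m) (Fin k) ℝ)
    (Dhat : Matrix (Fin k) (Fin k) ℝ)
    (hUhat : Uhatᵀ * Uhat = 1) (hVhat : Vhatᵀ * Vhat = 1)
    (hDhat : Dhat = Matrix.diagonal fun i : Fin k => sval Ahat (i.val + 1))
    (hAVhat : Ahat * Vhat = Uhat * Dhat) (hAUhat : Ahatᵀ * Uhat = Vhat * Dhat) :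
    matSpectralNorm (Uhat * Uhatᵀ - U * Uᵀ) ≤ 4 * ε / sval A k := by
  subst hD hDhat
  set σ := sval A k
  rw [matSpectralNorm_eq_l2_opNorm] at hpert ⊢
  have hσhat : σ / 2 ≤ sval Ahat k := by
    linarith [sval_le_sval_add A Ahat k, norm_sub_rev A Ahat]
  have hres : (1 - U * Uᵀ) * A = 0 :=
    norm_le_zero_iff.1 (hrank' ▸ l2_opNorm_one_sub_mul_transpose_mul_le_sval hU hV hAV hAU)
  have hreshat : ‖(1 - Uhat * Uhatᵀ) * Ahat‖ ≤ ε := by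
    linarith [sval_le_sval_add Ahat A (k + 1),
      l2_opNorm_one_sub_mul_transpose_mul_le_sval hUhat hVhat hAVhat hAUhat]
  have h₁ : ‖(1 - U * Uᵀ) * Ahat‖ ≤ ε := by
    rw [← sub_zero ((1 - U * Uᵀ) * Ahat), ← hres, ← Matrix.mul_sub]
    exact (l2_opNorm_one_sub_mul_transpose_mul_le hU _).trans hpert
  have h₂ : ‖(1 - Uhat * Uhatᵀ) * A‖ ≤ ε + ε := by
    rw [← sub_sub_cancel ((1 - Uhat * Uhatᵀ) * Ahat) ((1 - Uhat * Uhatᵀ) * A), ← Matrix.mul_sub]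
    exact norm_sub_le_of_le hreshat ((l2_opNorm_one_sub_mul_transpose_mul_le hUhat _).trans hpert)
  calc ‖Uhat * Uhatᵀ - U * Uᵀ‖
      ≤ ‖(1 - U * Uᵀ) * (Uhat * Uhatᵀ)‖ + ‖(1 - Uhat * Uhatᵀ) * (U * Uᵀ)‖ :=
        l2_opNorm_mul_transpose_sub_mul_transpose_le U Uhat
    _ ≤ ‖(1 - U * Uᵀ) * Ahat‖ / (σ / 2) + ‖(1 - Uhat * Uhatᵀ) * A‖ / σ := add_le_add
        (l2_opNorm_mul_mul_transpose_le _ (half_pos hrank)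
          (fun i => hσhat.trans (sval_le_of_lt Ahat i.isLt)) hUhat hVhat hAVhat)
        (l2_opNorm_mul_mul_transpose_le _ hrank (fun i => sval_le_of_lt A i.isLt) hU hV hAV)
    _ ≤ ε / (σ / 2) + (ε + ε) / σ := by gcongr
    _ = 4 * ε / σ := by field_simp; ring

/-- Wedin's theorem for the top-`k` singular subspace. If `A` has rank `k`
and `‖Â − A‖ ≤ ε ≤ σ_k(A)/2`, then the projections onto the column spans of the rank-`k`
truncated SVD left factors satisfy `‖Û Ûᵀ − U Uᵀ‖ ≤ 4ε/σ_k(A)`. -/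
theorem projection_perturbation
    {n m k : ℕ} (hk : k ≤ min n m)
    (A Ahat : Matrix (Fin n) (Fin m) ℝ) (ε : ℝ)
    (hrank : 0 < sval A k) (hrank' : sval A (k + 1) = 0)
    (hpert : matSpectralNorm (Ahat - A) ≤ ε) (hε : ε ≤ sval A k / 2)
    (U : Matrix (Fin n) (Fin k) ℝ) (V : Matrix (Fin m) (Fin k) ℝ)
    (D : Matrix (Fin k) (Fin k) ℝ)
    (hU : Uᵀ * U = 1) (hV : Vᵀ * V = 1)
    (hD : D = Matrix.diagonal fun i : Fin k => sval A (i.val + 1))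
    (hAV : A * V = U * D) (hAU : Aᵀ * U = V * D)
    (Uhat : Matrix (Fin n) (Fin k) ℝ) (Vhat : Matrix (Fin m) (Fin k) ℝ)
    (Dhat : Matrix (Fin k) (Fin k) ℝ)
    (hUhat : Uhatᵀ * Uhat = 1) (hVhat : Vhatᵀ * Vhat = 1)
    (hDhat : Dhat = Matrix.diagonal fun i : Fin k => sval Ahat (i.val + 1))
    (hAVhat : Ahat * Vhat = Uhat * Dhat) (hAUhat : Ahatᵀ * Uhat = Vhat * Dhat) :
    matSpectralNorm (Uhat * Uhatᵀ - U * Uᵀ) ≤ 4 * ε / sval A k :=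
  projection_perturbation_general A Ahat ε hrank hrank' hpert hε U V D hU hV hD hAV hAU Uhat Vhat
    Dhat hUhat hVhat hDhat hAVhat hAUhat
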